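/- Let $d\ge1$, $2<q<\infty$, $1\le p\le\infty$, and let $I=[t_0,T)$ be a bounded interval. Let $\{V(t,s)\}_{t,s\in[t_0,T]}$ be a family of bounded linear operators on $L^2(\mathbb{R}^d)$ such that: (i) $V(t,s)V(s,r)=V(t,r)$ for all $t,s,r\in[t_0,T]$; (ii) $\|V(t,s)f\|_{L^2}\le C_1\|f\|_{L^2}$ for all $t,s$ and $f\in L^2(\mathbb{R}^d)$; (iii) for every $s\in[t_0,T]$ and every $z\in L^2(\mathbb{R}^d)$, the map $t\mapsto (V(s,t))^{*}z$ (Hilbert-space adjoint) is strongly measurable on $I$ and $\|(V(s,\cdot))^{*}z\|_{L^q(I;L^p)}\le C_2\|z\|_{L^2}$. Then for every $f\in L^1(I;L^2(\mathbb{R}^d))\cap L^{q'}(I;L^{p'}(\mathbb{R}^d))$, the function $g(t):=\int_{t_0}^t V(t_0,s)f(s)\,ds$ satisfies $\|g\|_{V^{q'}(t_0,T;L^2)}\le C_1C_2\,\|f\|_{L^{q'}(I;L^{p'})}$, where $p'$ and $q'$ are the conjugate exponents of $p$ and $q$. -/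

import Mathlib

open MeasureTheory ENNReal

/-- The mixed space-time norm `‖u‖_{L^q(I; L^p(ℝ^d))}` (valued in `ℝ≥0∞`) of a function
`u : ℝ → L²(ℝ^d)`, where at each time the `L^p` norm of the representative is taken. -/
noncomputable def LqLpNorm (d : ℕ) (q : ℝ) (p : ℝ≥0∞) (I : Set ℝ)
    (u : ℝ → Lp ℂ 2 (volume : Measure (Fin d → ℝ))) : ℝ≥0∞ :=
  (∫⁻ t in I, (eLpNorm (⇑(u t)) p volume) ^ q) ^ (1 / q)

/-- The `r`-variation norm of `g : ℝ → H` on the interval `[a, b]`, valued in `ℝ≥0∞`. -/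
noncomputable def pVariationNorm {H : Type*} [NormedAddCommGroup H]
    (r a b : ℝ) (g : ℝ → H) : ℝ≥0∞ :=
  ⨆ (K : ℕ) (t : ℕ → ℝ) (_ : StrictMonoOn t (Set.Iic K))
      (_ : ∀ k ≤ K, t k ∈ Set.Icc a b),
    (∑ k ∈ Finset.range K, (‖g (t (k + 1)) - g (t k)‖₊ : ℝ≥0∞) ^ r) ^ (1 / r)

section Pettis
variable {H : Type*} [NormedAddCommGroup H] [InnerProductSpace ℂ H]

lemma normSq_eq_iSup_aux {D : ℕ → H} (hD : DenseRange D) (x : H) :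
    ‖x‖ ^ 2 = ⨆ n, (2 * RCLike.re (inner ℂ (D n) x : ℂ) - ‖D n‖ ^ 2) := by
  have hb : ∀ n, 2 * RCLike.re (inner ℂ (D n) x : ℂ) - ‖D n‖ ^ 2 ≤ ‖x‖ ^ 2 := by
    intro n
    have h := norm_sub_sq (𝕜 := ℂ) (D n) x
    nlinarith [sq_nonneg ‖D n - x‖]
  refine le_antisymm ?_ (ciSup_le hb)
  refine le_of_forall_pos_le_add fun ε hε => ?_
  obtain ⟨n, hn⟩ := hD.exists_dist_lt x (Real.sqrt_pos.2 hε)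
  have hd : ‖D n - x‖ ^ 2 < ε := by
    have h1 : ‖D n - x‖ < Real.sqrt ε := by
      rwa [dist_comm, dist_eq_norm] at hn
    nlinarith [norm_nonneg (D n - x), Real.sq_sqrt hε.le, Real.sqrt_nonneg ε]
  have h := norm_sub_sq (𝕜 := ℂ) (D n) x
  have hle : 2 * RCLike.re (inner ℂ (D n) x : ℂ) - ‖D n‖ ^ 2
      ≤ ⨆ n, (2 * RCLike.re (inner ℂ (D n) x : ℂ) - ‖D n‖ ^ 2) :=
    le_ciSup ⟨‖x‖ ^ 2, Set.forall_mem_range.2 hb⟩ n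
  nlinarith

lemma pettis_measurable {α : Type*} [MeasurableSpace α] [MeasurableSpace H] [BorelSpace H]
    {D : ℕ → H} (hD : DenseRange D) {g : α → H}
    (h : ∀ n, Measurable fun s => RCLike.re (inner ℂ (D n) (g s) : ℂ)) : Measurable g := by
  have hdist : ∀ c : H, Measurable fun s => ‖g s - c‖ ^ 2 := by
    intro c
    have : (fun s => ‖g s - c‖ ^ 2)
        = fun s => ⨆ n, (2 * (RCLike.re (inner ℂ (D n) (g s) : ℂ)
            - RCLike.re (inner ℂ (D n) c : ℂ)) - ‖D n‖ ^ 2) := by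
      funext s
      rw [normSq_eq_iSup_aux hD (g s - c)]
      congr 1; funext n
      rw [inner_sub_right, map_sub]
    rw [this]
    exact Measurable.iSup fun n =>
      (((h n).sub measurable_const).const_mul 2).sub measurable_const
  have hball : ∀ (c : H) (r : ℝ), MeasurableSet {s | dist (g s) c < r} := by
    intro c r
    rcases le_or_gt r 0 with hr | hr
    · have : {s | dist (g s) c < r} = ∅ := by
        ext s; simp only [Set.mem_setOf_eq, Set.mem_empty_iff_false, iff_false, not_lt]
        exact le_trans hr dist_nonneg
      rw [this]; exact MeasurableSet.empty
    · have : {s | dist (g s) c < r} = (fun s => ‖g s - c‖ ^ 2) ⁻¹' (Set.Iio (r ^ 2)) := by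
        ext s
        simp only [Set.mem_setOf_eq, Set.mem_preimage, Set.mem_Iio, dist_eq_norm]
        constructor
        · intro h'; nlinarith [norm_nonneg (g s - c)]
        · intro h'; nlinarith [norm_nonneg (g s - c)]
      rw [this]
      exact hdist c measurableSet_Iio
  refine measurable_of_isOpen fun U hU => ?_
  have : g ⁻¹' U = ⋃ (p : ℕ × ℚ) (_ : Metric.ball (D p.1) (p.2 : ℝ) ⊆ U),
      {s | dist (g s) (D p.1) < (p.2 : ℝ)} := by
    ext s
    simp only [Set.mem_preimage, Set.mem_iUnion, Set.mem_setOf_eq]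
    constructor
    · intro hs
      obtain ⟨ε, hε, hball'⟩ := Metric.isOpen_iff.1 hU _ hs
      obtain ⟨n, hn⟩ := hD.exists_dist_lt (g s) (by linarith : (0:ℝ) < ε / 3)
      obtain ⟨q, hq1, hq2⟩ := exists_rat_btwn (by linarith : ε / 3 < ε / 2)
      refine ⟨⟨n, q⟩, fun y hy => hball' ?_, lt_trans hn hq1⟩
      have := Metric.mem_ball.1 hy
      have hd : dist (g s) (D n) < ε / 3 := hn
      rw [Metric.mem_ball]
      calc dist y (g s) ≤ dist y (D n) + dist (D n) (g s) := dist_triangle _ _ _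
        _ < (q : ℝ) + ε / 3 := by rw [dist_comm (D n)]; linarith
        _ < ε := by linarith
    · rintro ⟨p, hsub, hd⟩
      exact hsub (Metric.mem_ball.2 hd)
  rw [this]
  exact MeasurableSet.iUnion fun p => MeasurableSet.iUnion fun _ => hball _ _

lemma pettis_aestronglyMeasurable {α : Type*} [MeasurableSpace α] {μ : Measure α}
    [SecondCountableTopology H] {g : α → H}
    (h : ∀ c : H, AEMeasurable (fun s => RCLike.re (inner ℂ c (g s) : ℂ)) μ) :
    AEStronglyMeasurable g μ := by
  classical
  borelize H
  have : Nonempty H := ⟨0⟩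
  set D := TopologicalSpace.denseSeq H with hDdef
  have hD : DenseRange D := TopologicalSpace.denseRange_denseSeq H
  have hae : ∀ᵐ s ∂μ, ∀ n, RCLike.re (inner ℂ (D n) (g s) : ℂ) = (h (D n)).mk _ s :=
    MeasureTheory.ae_all_iff.2 fun n => (h (D n)).ae_eq_mk
  set bad := {s | ¬ ∀ n, RCLike.re (inner ℂ (D n) (g s) : ℂ) = (h (D n)).mk _ s} with hbad
  have hbadnull : μ bad = 0 := by
    rw [← MeasureTheory.ae_iff] at *
    exact hae
  set N := MeasureTheory.toMeasurable μ bad with hN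
  have hNmeas : MeasurableSet N := measurableSet_toMeasurable μ bad
  have hNnull : μ N = 0 := by rw [hN, measure_toMeasurable]; exact hbadnull
  set G : α → H := N.piecewise (fun _ => 0) g with hG
  have hGmeas : Measurable G := by
    refine pettis_measurable hD fun n => ?_
    have : (fun s => RCLike.re (inner ℂ (D n) (G s) : ℂ))
        = N.piecewise (fun _ => (0:ℝ)) ((h (D n)).mk _) := by
      funext s
      rw [hG]
      by_cases hs : s ∈ N
      · rw [Set.piecewise_eq_of_mem _ _ _ hs, Set.piecewise_eq_of_mem _ _ _ hs]
        simp
      · rw [Set.piecewise_eq_of_notMem _ _ _ hs, Set.piecewise_eq_of_notMem _ _ _ hs]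
        have hsbad : s ∉ bad := fun hb => hs (subset_toMeasurable μ bad hb)
        have := not_not.1 hsbad
        exact this n
    rw [this]
    exact Measurable.piecewise hNmeas measurable_const (h (D n)).measurable_mk
  refine ⟨G, hGmeas.stronglyMeasurable, ?_⟩
  have : ∀ᵐ s ∂μ, s ∉ N := by
    rw [MeasureTheory.ae_iff]
    simpa using hNnull
  filter_upwards [this] with s hs
  rw [hG, Set.piecewise_eq_of_notMem _ _ _ hs]

end Pettis

open Classical in
lemma measurable_eLpNorm_Lp {X : Type*} [MeasurableSpace X] {ν : Measure X}
    {E : Type*} [NormedAddCommGroup E] (r : ℝ≥0∞)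
    [MeasurableSpace (Lp E 2 ν)] [BorelSpace (Lp E 2 ν)] :
    Measurable fun z : Lp E 2 ν => eLpNorm (⇑z) r ν := by
  have lsc : LowerSemicontinuous fun z : Lp E 2 ν => eLpNorm (⇑z) r ν := by
    rw [lowerSemicontinuous_iff_isClosed_preimage]
    intro c
    refine IsSeqClosed.isClosed ?_
    intro w z hw hwz
    have h1 : MeasureTheory.TendstoInMeasure ν (fun n => ⇑(w n)) Filter.atTop ⇑z :=
      MeasureTheory.tendstoInMeasure_of_tendsto_Lp hwz
    obtain ⟨ns, -, hns⟩ := h1.exists_seq_tendsto_ae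
    have h2 := MeasureTheory.Lp.eLpNorm_lim_le_liminf_eLpNorm (p := r)
      (fun n => MeasureTheory.Lp.aestronglyMeasurable (w (ns n))) (⇑z) hns
    refine Set.mem_preimage.2 (le_trans h2 ?_)
    calc Filter.atTop.liminf (fun n => eLpNorm (⇑(w (ns n))) r ν)
        ≤ Filter.atTop.liminf (fun _ => c) :=
          Filter.liminf_le_liminf (Filter.Eventually.of_forall fun n => hw (ns n))
      _ = c := Filter.liminf_const c
  exact lsc.measurable

lemma nnnorm_inner_le_eLpNorm_mul {X : Type*} [MeasurableSpace X] {ν : Measure X}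
    {p p' : ℝ≥0∞} (hp' : 1 / p + 1 / p' = 1) (F G : Lp ℂ 2 ν) :
    (‖(inner ℂ F G : ℂ)‖₊ : ℝ≥0∞) ≤ eLpNorm (⇑F) p ν * eLpNorm (⇑G) p' ν := by
  rw [MeasureTheory.L2.inner_def]
  calc (‖∫ a, (inner ℂ (F a) (G a) : ℂ) ∂ν‖₊ : ℝ≥0∞)
      = ENNReal.ofReal ‖∫ a, (inner ℂ (F a) (G a) : ℂ) ∂ν‖ :=
        (ofReal_norm_eq_enorm _).symm
    _ ≤ ENNReal.ofReal (∫⁻ a, ENNReal.ofReal ‖(inner ℂ (F a) (G a) : ℂ)‖ ∂ν).toReal :=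
        ENNReal.ofReal_le_ofReal (MeasureTheory.norm_integral_le_lintegral_norm _)
    _ ≤ ∫⁻ a, ENNReal.ofReal ‖(inner ℂ (F a) (G a) : ℂ)‖ ∂ν := ENNReal.ofReal_toReal_le
    _ = eLpNorm (fun a => (inner ℂ (F a) (G a) : ℂ)) 1 ν := by
        rw [MeasureTheory.eLpNorm_one_eq_lintegral_enorm]
        simp_rw [ofReal_norm_eq_enorm]
    _ ≤ eLpNorm (⇑F) p ν * eLpNorm (⇑G) p' ν := by
        haveI : ENNReal.HolderTriple p p' 1 := ⟨by simpa [one_div] using hp'⟩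
        have := MeasureTheory.eLpNorm_le_eLpNorm_mul_eLpNorm'_of_norm (p := p) (q := p') (r := 1)
          (MeasureTheory.Lp.aestronglyMeasurable F) (MeasureTheory.Lp.aestronglyMeasurable G)
          (fun a b => (inner ℂ a b : ℂ)) 1
          (Filter.Eventually.of_forall fun x => by simpa using norm_inner_le_norm (𝕜 := ℂ) (F x) (G x))
        simpa using this

instance : Fact ((2:ℝ≥0∞) ≠ ∞) := ⟨by norm_num⟩


set_option maxHeartbeats 1000000 in
/-- let `{V(t,s)}` be a family of bounded operators on `L²(ℝ^d)` satisfying the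
evolution property, a uniform `L²` bound with constant `C₁`, and the dual homogeneous
Strichartz estimate `‖(V(s,·))^* z‖_{L^q(I;L^p)} ≤ C₂ ‖z‖_{L²}` with `2 < q < ∞`.  Then for
every `f ∈ L¹(I;L²) ∩ L^{q'}(I;L^{p'})`, the Duhamel term `g(t) = ∫_{t₀}^t V(t₀,s) f(s) ds`
satisfies `‖g‖_{V^{q'}(t₀,T;L²)} ≤ C₁ C₂ ‖f‖_{L^{q'}(I;L^{p'})}`. -/
theorem stmt8 (d : ℕ) (hd : 1 ≤ d) (q q' : ℝ) (p p' : ℝ≥0∞)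
    (hq2 : 2 < q) (hp1 : 1 ≤ p)
    (hq' : 1 / q + 1 / q' = 1) (hp' : 1 / p + 1 / p' = 1)
    (t0 T : ℝ) (ht0T : t0 < T)
    (V : ℝ → ℝ → (Lp ℂ 2 (volume : Measure (Fin d → ℝ)) →L[ℂ]
        Lp ℂ 2 (volume : Measure (Fin d → ℝ))))
    (C1 C2 : ℝ)
    (hgroup : ∀ t ∈ Set.Icc t0 T, ∀ s ∈ Set.Icc t0 T, ∀ r ∈ Set.Icc t0 T,
      ∀ f, V t s (V s r f) = V t r f)
    (hbdd : ∀ t ∈ Set.Icc t0 T, ∀ s ∈ Set.Icc t0 T, ∀ f, ‖V t s f‖ ≤ C1 * ‖f‖)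
    (hadjmeas : ∀ s ∈ Set.Icc t0 T, ∀ z,
      AEStronglyMeasurable (fun t => ContinuousLinearMap.adjoint (V s t) z)
        (volume.restrict (Set.Ico t0 T)))
    (hadjstri : ∀ s ∈ Set.Icc t0 T, ∀ z,
      LqLpNorm d q p (Set.Ico t0 T) (fun t => ContinuousLinearMap.adjoint (V s t) z)
        ≤ ENNReal.ofReal (C2 * ‖z‖))
    (f : ℝ → Lp ℂ 2 (volume : Measure (Fin d → ℝ)))
    (hfmeas : AEStronglyMeasurable f (volume.restrict (Set.Ico t0 T)))
    (hfL1 : IntegrableOn f (Set.Ico t0 T) volume)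
    (hfLqp : LqLpNorm d q' p' (Set.Ico t0 T) f ≠ ⊤) :
    pVariationNorm q' t0 T (fun t => ∫ s in t0..t, V t0 s (f s))
      ≤ ENNReal.ofReal (C1 * C2) * LqLpNorm d q' p' (Set.Ico t0 T) f := by
  classical
  borelize (↥(Lp ℂ 2 (volume : Measure (Fin d → ℝ))))
  have ht0 : t0 ∈ Set.Icc t0 T := ⟨le_refl _, ht0T.le⟩
  -- exponent arithmetic
  have hq0 : 0 < q := by linarith
  have hq1 : 1 < q := by linarith
  have hqinvlt : 1 / q < 1 := by rw [div_lt_one hq0]; linarith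
  have hq'inv_pos : 0 < 1 / q' := by linarith
  have hq'pos : 0 < q' := one_div_pos.1 hq'inv_pos
  have hq'ne : q' ≠ 0 := ne_of_gt hq'pos
  have hconj : Real.HolderConjugate q q' := Real.holderConjugate_iff.mpr ⟨hq1, by simpa [one_div] using hq'⟩
  -- measure bookkeeping
  have hIcc : (volume : Measure ℝ).restrict (Set.Icc t0 T)
      = (volume : Measure ℝ).restrict (Set.Ico t0 T) :=
    (Measure.restrict_congr_set Ico_ae_eq_Icc).symm
  have hfmeas' : AEStronglyMeasurable f ((volume : Measure ℝ).restrict (Set.Icc t0 T)) := by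
    rw [hIcc]; exact hfmeas
  have hfL1' : IntegrableOn f (Set.Icc t0 T) volume := by
    rw [IntegrableOn, hIcc]; exact hfL1
  -- strong measurability of s ↦ V a s (f s)
  have hVmeas : ∀ a ∈ Set.Icc t0 T, AEStronglyMeasurable (fun s => (V a s) (f s))
      ((volume : Measure ℝ).restrict (Set.Icc t0 T)) := by
    intro a ha
    apply pettis_aestronglyMeasurable
    intro c
    have h1 : AEStronglyMeasurable (fun s => (ContinuousLinearMap.adjoint (V a s)) c)
        ((volume : Measure ℝ).restrict (Set.Icc t0 T)) := by
      rw [hIcc]; exact hadjmeas a ha c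
    have h2 : AEStronglyMeasurable
        (fun s => (inner ℂ ((ContinuousLinearMap.adjoint (V a s)) c) (f s) : ℂ))
        ((volume : Measure ℝ).restrict (Set.Icc t0 T)) := h1.inner hfmeas'
    have h3 : (fun s => RCLike.re (inner ℂ c ((V a s) (f s)) : ℂ))
        = fun s => RCLike.re (inner ℂ ((ContinuousLinearMap.adjoint (V a s)) c) (f s) : ℂ) := by
      funext s; rw [ContinuousLinearMap.adjoint_inner_left]
    rw [h3]
    exact (RCLike.continuous_re.comp_aestronglyMeasurable h2).aemeasurable
  -- integrability of s ↦ V a s (f s)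
  have hC1int : ∀ a ∈ Set.Icc t0 T, IntegrableOn (fun s => (V a s) (f s)) (Set.Icc t0 T) volume := by
    intro a ha
    refine Integrable.mono' (hfL1'.norm.const_mul C1) (hVmeas a ha) ?_
    filter_upwards [ae_restrict_mem measurableSet_Icc] with s hs
    exact hbdd a ha s hs (f s)
  -- finiteness of the Lq' integral
  have hIfin : (∫⁻ s in Set.Ico t0 T, (eLpNorm (⇑(f s)) p' volume) ^ q') ≠ ⊤ := by
    intro htop
    apply hfLqp
    rw [LqLpNorm, htop]
    exact ENNReal.top_rpow_of_pos hq'inv_pos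
  -- KEY per-interval estimate
  have key : ∀ a b : ℝ, t0 ≤ a → a ≤ b → b ≤ T →
      ((‖∫ s in Set.Ioc a b, (V t0 s) (f s)‖₊ : ℝ≥0∞))
        ≤ ENNReal.ofReal (C1 * C2)
          * (∫⁻ s in Set.Ioc a b, (eLpNorm (⇑(f s)) p' volume) ^ q') ^ (1/q') := by
    intro a b hta hab hbT
    have ha : a ∈ Set.Icc t0 T := ⟨hta, le_trans hab hbT⟩
    have hJsub : Set.Ioc a b ⊆ Set.Icc t0 T :=
      fun x hx => ⟨le_trans hta hx.1.le, le_trans hx.2 hbT⟩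
    have hIntJ : IntegrableOn (fun s => (V a s) (f s)) (Set.Ioc a b) volume :=
      (hC1int a ha).mono_set hJsub
    set u := ∫ s in Set.Ioc a b, (V a s) (f s) with hu
    have hstepA : (∫ s in Set.Ioc a b, (V t0 s) (f s)) = (V t0 a) u := by
      rw [hu, ← ContinuousLinearMap.integral_comp_comm _ hIntJ]
      refine setIntegral_congr_ae measurableSet_Ioc ?_
      refine Filter.Eventually.of_forall fun s hs => ?_
      exact (hgroup t0 ht0 a ha s (hJsub hs) (f s)).symm
    set R := (∫⁻ s in Set.Ioc a b, (eLpNorm (⇑(f s)) p' volume) ^ q') ^ (1/q') with hR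
    have hmonoJ : (∫⁻ s in Set.Ioc a b, (eLpNorm (⇑(f s)) p' volume) ^ q')
        ≤ ∫⁻ s in Set.Ico t0 T, (eLpNorm (⇑(f s)) p' volume) ^ q' := by
      rw [← hIcc]
      exact lintegral_mono' (Measure.restrict_mono hJsub le_rfl) le_rfl
    have hRfin : R ≠ ⊤ :=
      ENNReal.rpow_ne_top_of_nonneg hq'inv_pos.le (ne_top_of_le_ne_top hIfin hmonoJ)
    -- measurability of the two eLpNorm functions on J
    have hAbase : AEStronglyMeasurable (fun s => (ContinuousLinearMap.adjoint (V a s)) u)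
        ((volume : Measure ℝ).restrict (Set.Ioc a b)) := by
      have : AEStronglyMeasurable (fun s => (ContinuousLinearMap.adjoint (V a s)) u)
          ((volume : Measure ℝ).restrict (Set.Icc t0 T)) := by
        rw [hIcc]; exact hadjmeas a ha u
      exact this.mono_measure (Measure.restrict_mono hJsub le_rfl)
    have hA : AEMeasurable
        (fun s => eLpNorm (⇑((ContinuousLinearMap.adjoint (V a s)) u)) p volume)
        ((volume : Measure ℝ).restrict (Set.Ioc a b)) :=
      (measurable_eLpNorm_Lp p).comp_aemeasurable hAbase.aemeasurable
    have hB : AEMeasurable (fun s => eLpNorm (⇑(f s)) p' volume)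
        ((volume : Measure ℝ).restrict (Set.Ioc a b)) :=
      (measurable_eLpNorm_Lp p').comp_aemeasurable
        ((hfmeas'.mono_measure (Measure.restrict_mono hJsub le_rfl)).aemeasurable)
    -- duality bound for u
    have husq : ‖u‖ ^ 2 ≤ (max C2 0 * R.toReal) * ‖u‖ := by
      have hinner : (inner ℂ u u : ℂ) = ∫ s in Set.Ioc a b, (inner ℂ u ((V a s) (f s)) : ℂ) := by
        rw [hu]
        exact (integral_inner hIntJ _).symm
      have h2 : ‖u‖ ^ 2 = RCLike.re (inner ℂ u u : ℂ) := (inner_self_eq_norm_sq u).symm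
      have h3 : RCLike.re (inner ℂ u u : ℂ)
          ≤ ‖∫ s in Set.Ioc a b, (inner ℂ u ((V a s) (f s)) : ℂ)‖ := by
        rw [hinner]
        exact le_trans (le_abs_self _) (RCLike.abs_re_le_norm _)
      have h4 : ‖∫ s in Set.Ioc a b, (inner ℂ u ((V a s) (f s)) : ℂ)‖
          ≤ (∫⁻ s in Set.Ioc a b, ENNReal.ofReal ‖(inner ℂ u ((V a s) (f s)) : ℂ)‖).toReal :=
        norm_integral_le_lintegral_norm _
      have h5 : (∫⁻ s in Set.Ioc a b, ENNReal.ofReal ‖(inner ℂ u ((V a s) (f s)) : ℂ)‖)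
          ≤ ENNReal.ofReal (C2 * ‖u‖) * R := by
        have hpt : ∀ s, ENNReal.ofReal ‖(inner ℂ u ((V a s) (f s)) : ℂ)‖
            ≤ ((fun s => eLpNorm (⇑((ContinuousLinearMap.adjoint (V a s)) u)) p volume)
              * fun s => eLpNorm (⇑(f s)) p' volume) s := by
          intro s
          rw [Pi.mul_apply]
          have hadj : (inner ℂ u ((V a s) (f s)) : ℂ)
              = inner ℂ ((ContinuousLinearMap.adjoint (V a s)) u) (f s) :=
            (ContinuousLinearMap.adjoint_inner_left _ _ _).symm
          rw [hadj, ofReal_norm_eq_enorm]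
          exact nnnorm_inner_le_eLpNorm_mul hp' _ _
        have hstri : (∫⁻ s in Set.Ioc a b,
              (eLpNorm (⇑((ContinuousLinearMap.adjoint (V a s)) u)) p volume) ^ q) ^ (1/q)
            ≤ ENNReal.ofReal (C2 * ‖u‖) := by
          refine le_trans ?_ (hadjstri a ha u)
          rw [LqLpNorm]
          refine ENNReal.rpow_le_rpow ?_ (by positivity)
          rw [← hIcc]
          exact lintegral_mono' (Measure.restrict_mono hJsub le_rfl) le_rfl
        calc (∫⁻ s in Set.Ioc a b, ENNReal.ofReal ‖(inner ℂ u ((V a s) (f s)) : ℂ)‖)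
            ≤ ∫⁻ s in Set.Ioc a b,
                ((fun s => eLpNorm (⇑((ContinuousLinearMap.adjoint (V a s)) u)) p volume)
                  * fun s => eLpNorm (⇑(f s)) p' volume) s := lintegral_mono hpt
          _ ≤ (∫⁻ s in Set.Ioc a b,
                  (eLpNorm (⇑((ContinuousLinearMap.adjoint (V a s)) u)) p volume) ^ q) ^ (1/q)
                * (∫⁻ s in Set.Ioc a b, (eLpNorm (⇑(f s)) p' volume) ^ q') ^ (1/q') :=
              ENNReal.lintegral_mul_le_Lp_mul_Lq _ hconj hA hB
          _ ≤ ENNReal.ofReal (C2 * ‖u‖) * R := mul_le_mul' hstri le_rfl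
      have h6 : ‖u‖ ^ 2 ≤ (ENNReal.ofReal (C2 * ‖u‖) * R).toReal := by
        rw [h2]
        refine le_trans h3 (le_trans h4 ?_)
        exact ENNReal.toReal_mono (ENNReal.mul_ne_top ENNReal.ofReal_ne_top hRfin) h5
      have h7 : (ENNReal.ofReal (C2 * ‖u‖) * R).toReal ≤ (max C2 0 * R.toReal) * ‖u‖ := by
        rw [ENNReal.toReal_mul]
        have e1 : (ENNReal.ofReal (C2 * ‖u‖)).toReal ≤ max C2 0 * ‖u‖ := by
          calc (ENNReal.ofReal (C2 * ‖u‖)).toReal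
              ≤ (ENNReal.ofReal (max C2 0 * ‖u‖)).toReal := by
                refine ENNReal.toReal_mono ENNReal.ofReal_ne_top (ENNReal.ofReal_le_ofReal ?_)
                exact mul_le_mul_of_nonneg_right (le_max_left _ _) (norm_nonneg _)
            _ = max C2 0 * ‖u‖ := ENNReal.toReal_ofReal (by positivity)
        have e2 : (0:ℝ) ≤ R.toReal := ENNReal.toReal_nonneg
        nlinarith [ENNReal.toReal_nonneg (a := ENNReal.ofReal (C2 * ‖u‖)), norm_nonneg u]
      linarith
    have hunorm : ‖u‖ ≤ max C2 0 * R.toReal := by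
      rcases eq_or_lt_of_le (norm_nonneg u) with h0 | h0
      · rw [← h0]; positivity
      · have := le_of_mul_le_mul_right (by nlinarith : ‖u‖ * ‖u‖ ≤ (max C2 0 * R.toReal) * ‖u‖) h0
        linarith [this]
    have hΔ : ‖∫ s in Set.Ioc a b, (V t0 s) (f s)‖ ≤ max C1 0 * (max C2 0 * R.toReal) := by
      rw [hstepA]
      calc ‖(V t0 a) u‖ ≤ C1 * ‖u‖ := hbdd t0 ht0 a ha u
        _ ≤ max C1 0 * ‖u‖ := mul_le_mul_of_nonneg_right (le_max_left _ _) (norm_nonneg _)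
        _ ≤ max C1 0 * (max C2 0 * R.toReal) :=
            mul_le_mul_of_nonneg_left hunorm (le_max_right _ _)
    calc (‖∫ s in Set.Ioc a b, (V t0 s) (f s)‖₊ : ℝ≥0∞)
        = ENNReal.ofReal ‖∫ s in Set.Ioc a b, (V t0 s) (f s)‖ :=
          (ofReal_norm_eq_enorm _).symm
      _ ≤ ENNReal.ofReal (max C1 0 * (max C2 0 * R.toReal)) := ENNReal.ofReal_le_ofReal hΔ
      _ = ENNReal.ofReal (max C1 0 * max C2 0) * ENNReal.ofReal R.toReal := by
          rw [← ENNReal.ofReal_mul (by positivity), mul_assoc]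
      _ ≤ ENNReal.ofReal (C1 * C2) * R := by
          refine mul_le_mul' ?_ ENNReal.ofReal_toReal_le
          rcases le_or_gt 0 C1 with h1 | h1
          · rcases le_or_gt 0 C2 with h2 | h2
            · rw [max_eq_left h1, max_eq_left h2]
            · rw [max_eq_right h2.le, mul_zero, ENNReal.ofReal_zero]
              exact zero_le
          · rw [max_eq_right h1.le, zero_mul, ENNReal.ofReal_zero]
            exact zero_le
  -- variation norm estimate
  simp only [pVariationNorm, LqLpNorm]
  refine iSup_le fun K => iSup_le fun t => iSup_le fun hmono => iSup_le fun hmem => ?_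
  have hmonot : MonotoneOn t (Set.Iic K) := hmono.monotoneOn
  have hdiff : ∀ k, k < K →
      (∫ s in t0..t (k+1), (V t0 s) (f s)) - (∫ s in t0..t k, (V t0 s) (f s))
        = ∫ s in Set.Ioc (t k) (t (k+1)), (V t0 s) (f s) := by
    intro k hk
    have hk1 : t k ≤ t (k+1) :=
      (hmono (Set.mem_Iic.2 hk.le) (Set.mem_Iic.2 hk) (Nat.lt_succ_self k)).le
    have hIi : ∀ m, m ≤ K → IntervalIntegrable (fun s => (V t0 s) (f s)) volume t0 (t m) := by
      intro m hm
      rw [intervalIntegrable_iff]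
      refine (hC1int t0 ht0).mono_set ?_
      rw [Set.uIoc_of_le (hmem m hm).1]
      exact fun x hx => ⟨le_of_lt hx.1, le_trans hx.2 (hmem m hm).2⟩
    rw [intervalIntegral.integral_interval_sub_left (hIi _ hk) (hIi _ hk.le),
      intervalIntegral.integral_of_le hk1]
  set c : ℝ≥0∞ := ENNReal.ofReal (C1 * C2) with hc
  have hsum : ∀ k ∈ Finset.range K,
      (‖(∫ s in t0..t (k+1), (V t0 s) (f s)) - (∫ s in t0..t k, (V t0 s) (f s))‖₊ : ℝ≥0∞) ^ q'
        ≤ c ^ q' * ∫⁻ s in Set.Ioc (t k) (t (k+1)), (eLpNorm (⇑(f s)) p' volume) ^ q' := by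
    intro k hk
    rw [Finset.mem_range] at hk
    rw [hdiff k hk]
    have hkey := key (t k) (t (k+1)) (hmem k hk.le).1
      (hmono (Set.mem_Iic.2 hk.le) (Set.mem_Iic.2 hk) (Nat.lt_succ_self k)).le
      (hmem (k+1) hk).2
    calc (‖∫ s in Set.Ioc (t k) (t (k+1)), (V t0 s) (f s)‖₊ : ℝ≥0∞) ^ q'
        ≤ (c * (∫⁻ s in Set.Ioc (t k) (t (k+1)),
              (eLpNorm (⇑(f s)) p' volume) ^ q') ^ (1/q')) ^ q' :=
          ENNReal.rpow_le_rpow hkey hq'pos.le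
      _ = c ^ q' * ∫⁻ s in Set.Ioc (t k) (t (k+1)), (eLpNorm (⇑(f s)) p' volume) ^ q' := by
          rw [ENNReal.mul_rpow_of_nonneg _ _ hq'pos.le, ← ENNReal.rpow_mul,
            one_div_mul_cancel hq'ne, ENNReal.rpow_one]
  have hdisj : (↑(Finset.range K) : Set ℕ).PairwiseDisjoint
      fun k => Set.Ioc (t k) (t (k+1)) := by
    intro i hi j hj hij
    simp only [Finset.coe_range, Set.mem_Iio] at hi hj
    rcases hij.lt_or_gt with h | h
    · refine Set.Ioc_disjoint_Ioc.2 ?_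
      refine le_trans (min_le_left _ _) (le_trans ?_ (le_max_right _ _))
      exact hmonot (Set.mem_Iic.2 (le_trans (Nat.succ_le_of_lt h) hj.le))
        (Set.mem_Iic.2 hj.le) (Nat.succ_le_of_lt h)
    · refine Set.Ioc_disjoint_Ioc.2 ?_
      refine le_trans (min_le_right _ _) (le_trans ?_ (le_max_left _ _))
      exact hmonot (Set.mem_Iic.2 (le_trans (Nat.succ_le_of_lt h) hi.le))
        (Set.mem_Iic.2 hi.le) (Nat.succ_le_of_lt h)
  have hUsub : (⋃ k ∈ Finset.range K, Set.Ioc (t k) (t (k+1))) ⊆ Set.Icc t0 T := by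
    intro x hx
    simp only [Set.mem_iUnion, Finset.mem_range] at hx
    obtain ⟨k, hk, hx⟩ := hx
    exact ⟨le_trans (hmem k hk.le).1 hx.1.le, le_trans hx.2 (hmem (k+1) hk).2⟩
  calc (∑ k ∈ Finset.range K,
        (‖(∫ s in t0..t (k+1), (V t0 s) (f s)) - (∫ s in t0..t k, (V t0 s) (f s))‖₊ : ℝ≥0∞) ^ q')
          ^ (1/q')
      ≤ (∑ k ∈ Finset.range K, c ^ q'
          * ∫⁻ s in Set.Ioc (t k) (t (k+1)), (eLpNorm (⇑(f s)) p' volume) ^ q') ^ (1/q') :=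
        ENNReal.rpow_le_rpow (Finset.sum_le_sum hsum) hq'inv_pos.le
    _ = (c ^ q' * ∑ k ∈ Finset.range K,
          ∫⁻ s in Set.Ioc (t k) (t (k+1)), (eLpNorm (⇑(f s)) p' volume) ^ q') ^ (1/q') := by
        rw [← Finset.mul_sum]
    _ ≤ (c ^ q' * ∫⁻ s in Set.Ico t0 T, (eLpNorm (⇑(f s)) p' volume) ^ q') ^ (1/q') := by
        refine ENNReal.rpow_le_rpow (mul_le_mul' le_rfl ?_) hq'inv_pos.le
        rw [← lintegral_biUnion_finset hdisj (fun _ _ => measurableSet_Ioc)]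
        rw [← hIcc]
        exact lintegral_mono' (Measure.restrict_mono hUsub le_rfl) le_rfl
    _ = c * (∫⁻ s in Set.Ico t0 T, (eLpNorm (⇑(f s)) p' volume) ^ q') ^ (1/q') := by
        rw [ENNReal.mul_rpow_of_nonneg _ _ hq'inv_pos.le, ← ENNReal.rpow_mul,
          mul_one_div_cancel hq'ne, ENNReal.rpow_one]
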